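/- (Dobinski formula for exponential polynomials, via the GHW derivation of A.2.) For every natural number n and every real number x, the series Σ_{m=0}^{∞} m^n·x^m/m! converges absolutely and Σ_{m=0}^{∞} m^n·x^m/m! = e^x · Σ_{k=0}^{n} S(n,k)·x^k, where φ_n(x) = Σ_{k=0}^{n} S(n,k)·x^k is the n-th exponential (Touchard) polynomial; in particular for x = 1 one recovers Dobinski's formula B_n = e^{-1} Σ_{m≥0} m^n/m! for the Bell numbers B_n = Σ_{k=0}^{n} S(n,k). -/

import Mathlib

/-- The Stirling numbers of the second kind, defined by `S(0,0) = 1`,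
`S(n+1,k+1) = S(n,k) + (k+1)·S(n,k+1)` and vanishing boundary values. -/
def stirling2 : ℕ → ℕ → ℕ
  | 0, 0 => 1
  | 0, _ + 1 => 0
  | _ + 1, 0 => 0
  | n + 1, k + 1 => stirling2 n k + (k + 1) * stirling2 n (k + 1)

lemma stirling2_eq_zero : ∀ n k : ℕ, n < k → stirling2 n k = 0
  | 0, _ + 1, _ => rfl
  | n + 1, k + 1, h => by
    rw [stirling2, stirling2_eq_zero n k (by omega), stirling2_eq_zero n (k+1) (by omega)]
    ring

lemma mul_desc (m k : ℕ) :
    m * m.descFactorial k = m.descFactorial (k + 1) + k * m.descFactorial k := by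
  rw [Nat.descFactorial_succ]
  rcases le_or_gt k m with h | h
  · have : m - k + k = m := by omega
    nlinarith [this]
  · rw [Nat.descFactorial_of_lt h]; ring

lemma pow_eq_sum_stirling (n m : ℕ) :
    m ^ n = ∑ k ∈ Finset.range (n + 1), stirling2 n k * m.descFactorial k := by
  induction n with
  | zero => simp [stirling2]
  | succ n ih =>
    have : m ^ (n+1) = ∑ k ∈ Finset.range (n + 1),
        stirling2 n k * (m.descFactorial (k+1) + k * m.descFactorial k) := by
      rw [pow_succ, ih, Finset.sum_mul]
      refine Finset.sum_congr rfl fun k _ => ?_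
      rw [← mul_desc]; ring
    rw [this]
    rw [Finset.sum_range_succ' (fun k => stirling2 (n+1) k * m.descFactorial k) (n+1)]
    simp only [stirling2, Nat.descFactorial_zero, mul_one, mul_zero, add_zero]
    have key : ∑ k ∈ Finset.range (n + 1), stirling2 n k * (k * m.descFactorial k)
        = ∑ k ∈ Finset.range (n + 1), (k+1) * stirling2 n (k+1) * m.descFactorial (k+1) := by
      rw [Finset.sum_range_succ' (fun k => stirling2 n k * (k * m.descFactorial k)) n]
      rw [Finset.sum_range_succ (fun k => (k+1) * stirling2 n (k+1) * m.descFactorial (k+1)) n]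
      rw [stirling2_eq_zero n (n+1) (by omega)]
      simp only [mul_zero, zero_mul, add_zero]
      exact Finset.sum_congr rfl fun j _ => by ring
    calc ∑ k ∈ Finset.range (n + 1), stirling2 n k * (m.descFactorial (k + 1) + k * m.descFactorial k)
        = (∑ k ∈ Finset.range (n + 1), stirling2 n k * m.descFactorial (k + 1))
          + ∑ k ∈ Finset.range (n + 1), stirling2 n k * (k * m.descFactorial k) := by
          rw [← Finset.sum_add_distrib]
          exact Finset.sum_congr rfl fun k _ => by ring
      _ = (∑ k ∈ Finset.range (n + 1), stirling2 n k * m.descFactorial (k + 1))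
          + ∑ k ∈ Finset.range (n + 1), (k+1) * stirling2 n (k+1) * m.descFactorial (k+1) := by
          rw [key]
      _ = ∑ k ∈ Finset.range (n + 1), (stirling2 n k + (k + 1) * stirling2 n (k + 1)) * m.descFactorial (k + 1) := by
          rw [← Finset.sum_add_distrib]
          exact Finset.sum_congr rfl fun k _ => by ring

lemma desc_hasSum (k : ℕ) (x : ℝ) :
    HasSum (fun m : ℕ => (m.descFactorial k : ℝ) * x ^ m / (Nat.factorial m : ℝ))
      (x ^ k * Real.exp x) := by
  set f : ℕ → ℝ := fun m => (m.descFactorial k : ℝ) * x ^ m / (Nat.factorial m : ℝ) with hf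
  have hinj : Function.Injective (fun j : ℕ => j + k) := add_left_injective k
  have hzero : ∀ m, m ∉ Set.range (fun j : ℕ => j + k) → f m = 0 := by
    intro m hm
    have hmk : m < k := by
      by_contra h
      exact hm ⟨m - k, by simp; omega⟩
    simp [hf, Nat.descFactorial_of_lt hmk]
  have hcomp : (fun j => f (j + k)) = fun j => x ^ k * (x ^ j / (Nat.factorial j : ℝ)) := by
    funext j
    have hfac : ((j + k).factorial : ℝ)
        = (Nat.factorial j : ℝ) * ((j + k).descFactorial k : ℝ) := by
      rw [← Nat.cast_mul]
      congr 1
      have := Nat.factorial_mul_descFactorial (n := j + k) (k := k) (by omega)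
      rw [← this, Nat.add_sub_cancel]
    have hd : ((j + k).descFactorial k : ℝ) ≠ 0 := by
      simp only [ne_eq, Nat.cast_eq_zero, Nat.descFactorial_eq_zero_iff_lt]
      omega
    have hj : (Nat.factorial j : ℝ) ≠ 0 := Nat.cast_ne_zero.mpr (Nat.factorial_ne_zero j)
    simp only [hf]
    rw [hfac]
    field_simp
    ring
  have hs : HasSum (fun j => f (j + k)) (x ^ k * Real.exp x) := by
    rw [hcomp]
    have := NormedSpace.expSeries_div_hasSum_exp x
    rw [← Real.exp_eq_exp_ℝ] at this
    exact this.mul_left _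
  exact (hinj.hasSum_iff hzero).mp hs

lemma main_hasSum (n : ℕ) (x : ℝ) :
    HasSum (fun m : ℕ => (m : ℝ) ^ n * x ^ m / (Nat.factorial m : ℝ))
      (Real.exp x * ∑ k ∈ Finset.range (n + 1), (stirling2 n k : ℝ) * x ^ k) := by
  have hfun : (fun m : ℕ => (m : ℝ) ^ n * x ^ m / (Nat.factorial m : ℝ))
      = fun m : ℕ => ∑ k ∈ Finset.range (n + 1),
        (stirling2 n k : ℝ) * ((m.descFactorial k : ℝ) * x ^ m / (Nat.factorial m : ℝ)) := by
    funext m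
    have h := pow_eq_sum_stirling n m
    have : (m : ℝ) ^ n = ∑ k ∈ Finset.range (n + 1),
        (stirling2 n k : ℝ) * (m.descFactorial k : ℝ) := by
      rw [← Nat.cast_pow, h]
      push_cast
      rfl
    rw [this, Finset.sum_mul, Finset.sum_div]
    exact Finset.sum_congr rfl fun k _ => by ring
  rw [hfun]
  have hs : HasSum (fun m : ℕ => ∑ k ∈ Finset.range (n + 1),
        (stirling2 n k : ℝ) * ((m.descFactorial k : ℝ) * x ^ m / (Nat.factorial m : ℝ)))
      (∑ k ∈ Finset.range (n + 1), (stirling2 n k : ℝ) * (x ^ k * Real.exp x)) :=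
    hasSum_sum fun k _ => (desc_hasSum k x).mul_left _
  convert hs using 1
  rw [Finset.mul_sum]
  exact Finset.sum_congr rfl fun k _ => by ring

lemma dobinski_aux (n : ℕ) (x : ℝ) :
    (Summable fun m : ℕ => |(m : ℝ) ^ n * x ^ m / (Nat.factorial m : ℝ)|) ∧
    (∑' m : ℕ, (m : ℝ) ^ n * x ^ m / (Nat.factorial m : ℝ)) =
      Real.exp x * ∑ k ∈ Finset.range (n + 1), (stirling2 n k : ℝ) * x ^ k ∧
    ((∑ k ∈ Finset.range (n + 1), stirling2 n k : ℕ) : ℝ) =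
      (Real.exp 1)⁻¹ * ∑' m : ℕ, (m : ℝ) ^ n / (Nat.factorial m : ℝ) := by
  refine ⟨?_, (main_hasSum n x).tsum_eq, ?_⟩
  · have h := (main_hasSum n |x|).summable
    have : (fun m : ℕ => |(m : ℝ) ^ n * x ^ m / (Nat.factorial m : ℝ)|)
        = fun m : ℕ => (m : ℝ) ^ n * |x| ^ m / (Nat.factorial m : ℝ) := by
      funext m
      rw [abs_div, abs_mul, abs_pow, abs_pow, abs_of_nonneg (by positivity : (0:ℝ) ≤ (m:ℝ)),
        abs_of_nonneg (by positivity : (0:ℝ) ≤ (Nat.factorial m : ℝ))]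
    rw [this]
    exact h
  · have h := (main_hasSum n 1).tsum_eq
    simp only [one_pow, mul_one] at h
    rw [h, ← mul_assoc, inv_mul_cancel₀ (Real.exp_ne_zero 1), one_mul, Nat.cast_sum]

/-- Dobinski formula for the exponential (Touchard) polynomials:
`Σ_{m≥0} m^n·x^m/m!` converges absolutely and equals `e^x·φ_n(x)` with
`φ_n(x) = Σ_{k=0}^{n} S(n,k)·x^k`; in particular, at `x = 1`,
`B_n = e^{-1}·Σ_{m≥0} m^n/m!` for the Bell numbers `B_n = Σ_{k=0}^{n} S(n,k)`. -/
theorem dobinski_exponential_polynomials (n : ℕ) (x : ℝ) :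
    (Summable fun m : ℕ => |(m : ℝ) ^ n * x ^ m / (Nat.factorial m : ℝ)|) ∧
    (∑' m : ℕ, (m : ℝ) ^ n * x ^ m / (Nat.factorial m : ℝ)) =
      Real.exp x * ∑ k ∈ Finset.range (n + 1), (stirling2 n k : ℝ) * x ^ k ∧
    ((∑ k ∈ Finset.range (n + 1), stirling2 n k : ℕ) : ℝ) =
      (Real.exp 1)⁻¹ * ∑' m : ℕ, (m : ℝ) ^ n / (Nat.factorial m : ℝ) := by
  exact dobinski_aux n x
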